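/- Let K be a finite index set, S a nonempty set, τ_k ≥ 0 real weights, and f_k : S → ℝ functions with f_k(x) ≥ 0 for all x ∈ S and all k. Then for every pair (x, y) ∈ S × S there exists z ∈ {x, y} such that Σ_k τ_k·log(1 + f_k(x)·f_k(y)) ≤ Σ_k τ_k·log(1 + f_k(z)²). -/

import Mathlib

/-!
By Cauchy–Schwarz, `(1 + a b)² ≤ (1 + a²)(1 + b²)`, so `log (1 + a b)` is at most the average of
`log (1 + a²)` and `log (1 + b²)`. Summing with nonnegative weights, the mixed objective is at most
the average of the two static objectives, hence at most the larger of them.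
-/

open Finset

theorem Real.two_mul_log_one_add_mul_le {a b : ℝ} (ha : 0 ≤ a) (hb : 0 ≤ b) :
    2 * Real.log (1 + a * b) ≤ Real.log (1 + a ^ 2) + Real.log (1 + b ^ 2) := by
  have hsq : (1 + a * b) ^ 2 ≤ (1 + a ^ 2) * (1 + b ^ 2) := by nlinarith [sq_nonneg (a - b)]
  calc 2 * Real.log (1 + a * b) = Real.log ((1 + a * b) ^ 2) := by rw [Real.log_pow]; norm_num
    _ ≤ Real.log ((1 + a ^ 2) * (1 + b ^ 2)) := Real.log_le_log (by positivity) hsq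
    _ = Real.log (1 + a ^ 2) + Real.log (1 + b ^ 2) := Real.log_mul (by positivity) (by positivity)

theorem two_mul_sum_log_one_add_mul_le {ι : Type*} (K : Finset ι) {τ a b : ι → ℝ}
    (hτ : ∀ k ∈ K, 0 ≤ τ k) (ha : ∀ k ∈ K, 0 ≤ a k) (hb : ∀ k ∈ K, 0 ≤ b k) :
    2 * ∑ k ∈ K, τ k * Real.log (1 + a k * b k) ≤
      ∑ k ∈ K, τ k * Real.log (1 + a k ^ 2) + ∑ k ∈ K, τ k * Real.log (1 + b k ^ 2) := by
  rw [mul_sum, ← sum_add_distrib]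
  refine sum_le_sum fun k hk => ?_
  have := mul_le_mul_of_nonneg_left
    (Real.two_mul_log_one_add_mul_le (ha k hk) (hb k hk)) (hτ k hk)
  linarith

theorem stmt_17_general {ι : Type*} {S : Type*} (K : Finset ι)
    (τ : ι → ℝ) (f : ι → S → ℝ)
    (hτ : ∀ k ∈ K, 0 ≤ τ k) (hf : ∀ k ∈ K, ∀ x : S, 0 ≤ f k x)
    (x y : S) :
    ∃ z ∈ ({x, y} : Set S),
      ∑ k ∈ K, τ k * Real.log (1 + f k x * f k y) ≤
        ∑ k ∈ K, τ k * Real.log (1 + (f k z) ^ 2) := by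
  have hmid := two_mul_sum_log_one_add_mul_le K hτ (fun k hk => hf k hk x) (fun k hk => hf k hk y)
  rcases le_total (∑ k ∈ K, τ k * Real.log (1 + f k x ^ 2))
      (∑ k ∈ K, τ k * Real.log (1 + f k y ^ 2)) with h | h
  · exact ⟨y, by simp, by linarith⟩
  · exact ⟨x, by simp, by linarith⟩

/-- Pointwise form of `R*_{UL-adp} = R*_{Static}`: for any pair of phase-shift
vectors `(x, y)`, one of the two, used statically, does at least as well. -/
theorem stmt_17 {ι : Type*} {S : Type*} [Nonempty S] (K : Finset ι)
    (τ : ι → ℝ) (f : ι → S → ℝ)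
    (hτ : ∀ k ∈ K, 0 ≤ τ k) (hf : ∀ k ∈ K, ∀ x : S, 0 ≤ f k x)
    (x y : S) :
    ∃ z ∈ ({x, y} : Set S),
      ∑ k ∈ K, τ k * Real.log (1 + f k x * f k y) ≤
        ∑ k ∈ K, τ k * Real.log (1 + (f k z) ^ 2) :=
  stmt_17_general K τ f hτ hf x y
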